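/- Let β > 0. Define a sequence (a_k)_{k∈ℕ} of positive real numbers by a₁ := 1 and, for k ≥ 2, a_k := (1/(k−1)) Σ_{k₁,k₂ ∈ ℕ, k₁+k₂=k} (2k₂)^β a_{k₁} a_{k₂}. Then for every k ∈ ℕ one has a_k ≤ (π² 2^β)^{k−1} ((k−1)!)^{max(0, β−1)}. -/

import Mathlib

/-!
Induct on the stronger bound `a k ≤ M k := C^(k-1) ((k-1)!)^γ / k²`, where `C = π² 2^β` and
`γ = max 0 (β - 1)`: a nonnegative solution of the recursion lies below every supersolution, and
`M` is one. Writing `k₂^β ≤ k₂ · k₂^γ` and using `(k₁-1)! k₂! ≤ (k-1)!`, the supersolution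
inequality reduces to `∑_{k₁+k₂=k} 1/(k₁² k₂) ≤ π² (k-1)/k²`, which follows from the partial
fractions `1/(i² j) = 1/(k i²) + (1/i + 1/j)/k²` for `i + j = k` together with `∑ 1/i² ≤ π²/6`.
-/

open Finset Real
open scoped Nat

def posAntidiagonal (k : ℕ) : Finset (ℕ × ℕ) :=
  (HasAntidiagonal.antidiagonal k).filter (fun p => 1 ≤ p.1 ∧ 1 ≤ p.2)

lemma mem_posAntidiagonal {k : ℕ} {p : ℕ × ℕ} :
    p ∈ posAntidiagonal k ↔ p.1 + p.2 = k ∧ 1 ≤ p.1 ∧ 1 ≤ p.2 := by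
  simp [posAntidiagonal]

lemma posAntidiagonal_eq_image (k : ℕ) :
    posAntidiagonal k = (Icc 1 (k - 1)).image (fun i => (i, k - i)) := by
  ext ⟨i, j⟩
  simp only [mem_posAntidiagonal, mem_image, mem_Icc, Prod.mk.injEq]
  constructor
  · rintro ⟨hij, hi, hj⟩
    exact ⟨i, ⟨hi, by omega⟩, rfl, by omega⟩
  · rintro ⟨i, hi, rfl, rfl⟩
    omega

lemma sum_one_div_sq_le_pi_sq_div_six (s : Finset ℕ) :
    ∑ i ∈ s, 1 / (i : ℝ) ^ 2 ≤ π ^ 2 / 6 :=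
  sum_le_hasSum s (fun _ _ => by positivity) hasSum_zeta_two

lemma one_div_sq_mul_le {x y : ℝ} (hx : 1 ≤ x) (hy : 1 ≤ y) :
    1 / (x ^ 2 * y) ≤ 1 / ((x + y) * x ^ 2) + 2 / (x + y) ^ 2 := by
  have partial_fractions :
      1 / (x ^ 2 * y) = 1 / ((x + y) * x ^ 2) + (1 / x + 1 / y) / (x + y) ^ 2 := by
    field_simp
    ring
  have : 1 / x + 1 / y ≤ 2 := by
    linarith [div_le_one_of_le₀ hx (by linarith), div_le_one_of_le₀ hy (by linarith)]
  rw [partial_fractions]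
  gcongr

lemma sum_posAntidiagonal_one_div_le {k : ℕ} (hk : 2 ≤ k) :
    ∑ p ∈ posAntidiagonal k, 1 / ((p.1 : ℝ) ^ 2 * p.2) ≤ π ^ 2 * (k - 1) / k ^ 2 := by
  have hkR : (2 : ℝ) ≤ k := by exact_mod_cast hk
  rw [posAntidiagonal_eq_image, sum_image (fun _ _ _ _ h => (Prod.mk.inj h).1)]
  calc ∑ i ∈ Icc 1 (k - 1), 1 / ((i : ℝ) ^ 2 * (k - i : ℕ))
      ≤ ∑ i ∈ Icc 1 (k - 1), (1 / (k * (i : ℝ) ^ 2) + 2 / (k : ℝ) ^ 2) := by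
        refine sum_le_sum fun i hi => ?_
        obtain ⟨hi1, hik⟩ := mem_Icc.mp hi
        have hsum : (i : ℝ) + (k - i : ℕ) = k := by
          exact_mod_cast Nat.add_sub_of_le (by omega)
        have := one_div_sq_mul_le (x := i) (y := (k - i : ℕ)) (by exact_mod_cast hi1)
          (by exact_mod_cast (by omega : 1 ≤ k - i))
        rwa [hsum] at this
    _ = (1 / k) * ∑ i ∈ Icc 1 (k - 1), 1 / (i : ℝ) ^ 2 + (k - 1) * (2 / (k : ℝ) ^ 2) := by
        rw [sum_add_distrib, mul_sum, sum_const, Nat.card_Icc, nsmul_eq_mul,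
          Nat.cast_sub (by omega)]
        congr 1
        · exact sum_congr rfl fun i _ => by field_simp
        · simp [Nat.cast_sub (by omega : 1 ≤ k)]
    _ ≤ (1 / k) * (π ^ 2 / 6) + (k - 1) * (2 / (k : ℝ) ^ 2) := by
        gcongr
        exact sum_one_div_sq_le_pi_sq_div_six _
    _ ≤ π ^ 2 * (k - 1) / k ^ 2 := by
        have hpi : 9 ≤ π ^ 2 := by nlinarith [pi_gt_three]
        have key : π ^ 2 * k / 6 + 2 * (k - 1) ≤ π ^ 2 * (k - 1) := by nlinarith
        calc (1 / k) * (π ^ 2 / 6) + (k - 1) * (2 / (k : ℝ) ^ 2)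
            = (π ^ 2 * k / 6 + 2 * (k - 1)) / k ^ 2 := by field_simp
          _ ≤ π ^ 2 * (k - 1) / k ^ 2 := by gcongr

lemma rpow_le_mul_rpow_max_zero_sub_one {x : ℝ} (hx : 1 ≤ x) (β : ℝ) :
    x ^ β ≤ x * x ^ max 0 (β - 1) := by
  rw [← rpow_one_add' (by linarith) (by positivity)]
  exact rpow_le_rpow_of_exponent_le hx (by linarith [le_max_right 0 (β - 1)])

lemma succ_rpow_mul_factorial_rpow_le (β : ℝ) (m n : ℕ) :
    ((n : ℝ) + 1) ^ β * ((m ! : ℝ) * n !) ^ max 0 (β - 1)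
      ≤ ((n : ℝ) + 1) * ((m + n + 1)! : ℝ) ^ max 0 (β - 1) := by
  have hfac : (m ! : ℝ) * (n + 1)! ≤ (m + n + 1)! := by
    exact_mod_cast Nat.le_of_dvd (Nat.factorial_pos _)
      (Nat.factorial_mul_factorial_dvd_factorial_add m (n + 1))
  calc ((n : ℝ) + 1) ^ β * ((m ! : ℝ) * n !) ^ max 0 (β - 1)
      ≤ ((n : ℝ) + 1) * ((n : ℝ) + 1) ^ max 0 (β - 1) * ((m ! : ℝ) * n !) ^ max 0 (β - 1) := by
        gcongr
        exact rpow_le_mul_rpow_max_zero_sub_one (by linarith [n.cast_nonneg (α := ℝ)]) β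
    _ = ((n : ℝ) + 1) * ((m ! : ℝ) * (n + 1)!) ^ max 0 (β - 1) := by
        rw [mul_assoc, ← mul_rpow (by positivity) (by positivity), Nat.factorial_succ]
        push_cast
        ring_nf
    _ ≤ ((n : ℝ) + 1) * ((m + n + 1)! : ℝ) ^ max 0 (β - 1) := by
        gcongr

noncomputable def recStep (β : ℝ) (a : ℕ → ℝ) (k : ℕ) : ℝ :=
  1 / ((k : ℝ) - 1) * ∑ p ∈ posAntidiagonal k, (2 * (p.2 : ℝ)) ^ β * a p.1 * a p.2

lemma recStep_nonneg_and_mono {β : ℝ} {a b : ℕ → ℝ} {k : ℕ} (hk : 1 ≤ k)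
    (hab : ∀ j, 1 ≤ j → j < k → 0 ≤ a j ∧ a j ≤ b j) :
    0 ≤ recStep β a k ∧ recStep β a k ≤ recStep β b k := by
  have hk' : (0 : ℝ) ≤ 1 / ((k : ℝ) - 1) := by
    have : (1 : ℝ) ≤ k := by exact_mod_cast hk
    exact one_div_nonneg.mpr (by linarith)
  have hterm : ∀ p ∈ posAntidiagonal k,
      0 ≤ (2 * (p.2 : ℝ)) ^ β * a p.1 * a p.2 ∧
        (2 * (p.2 : ℝ)) ^ β * a p.1 * a p.2 ≤ (2 * (p.2 : ℝ)) ^ β * b p.1 * b p.2 := by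
    intro p hp
    obtain ⟨hsum, h1, h2⟩ := mem_posAntidiagonal.mp hp
    obtain ⟨ha1, hb1⟩ := hab p.1 h1 (by omega)
    obtain ⟨ha2, hb2⟩ := hab p.2 h2 (by omega)
    have hw : 0 ≤ (2 * (p.2 : ℝ)) ^ β := by positivity
    exact ⟨by positivity, mul_le_mul (by gcongr) hb2 ha2 (mul_nonneg hw (ha1.trans hb1))⟩
  exact ⟨mul_nonneg hk' (sum_nonneg fun p hp => (hterm p hp).1),
    mul_le_mul_of_nonneg_left (sum_le_sum fun p hp => (hterm p hp).2) hk'⟩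

lemma nonneg_and_le_of_recStep_le {β : ℝ} {a b : ℕ → ℝ} (ha1 : 0 ≤ a 1) (hab1 : a 1 ≤ b 1)
    (ha : ∀ k, 2 ≤ k → a k = recStep β a k) (hb : ∀ k, 2 ≤ k → recStep β b k ≤ b k) :
    ∀ k, 1 ≤ k → 0 ≤ a k ∧ a k ≤ b k := by
  intro k
  induction k using Nat.strong_induction_on with
  | _ k ih =>
    intro hk
    rcases hk.eq_or_lt with rfl | hk2
    · exact ⟨ha1, hab1⟩
    · obtain ⟨hnonneg, hle⟩ := recStep_nonneg_and_mono (β := β) hk fun j hj hjk => ih j hjk hj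
      rw [ha k hk2]
      exact ⟨hnonneg, hle.trans (hb k hk2)⟩

noncomputable def majorant (β : ℝ) (k : ℕ) : ℝ :=
  (π ^ 2 * 2 ^ β) ^ (k - 1) * ((k - 1)! : ℝ) ^ max 0 (β - 1) / (k : ℝ) ^ 2

lemma mul_majorant_le (β : ℝ) {i j : ℕ} (hi : 1 ≤ i) (hj : 1 ≤ j) :
    (2 * (j : ℝ)) ^ β * majorant β i * majorant β j
      ≤ 2 ^ β * (π ^ 2 * 2 ^ β) ^ (i + j - 2) * ((i + j - 1)! : ℝ) ^ max 0 (β - 1)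
        * (1 / ((i : ℝ) ^ 2 * j)) := by
  obtain ⟨m, rfl⟩ : ∃ m, i = m + 1 := ⟨i - 1, by omega⟩
  obtain ⟨n, rfl⟩ : ∃ n, j = n + 1 := ⟨j - 1, by omega⟩
  set C := π ^ 2 * (2 : ℝ) ^ β
  set γ := max 0 (β - 1)
  rw [show m + 1 + (n + 1) - 2 = m + n by omega, show m + 1 + (n + 1) - 1 = m + n + 1 by omega]
  simp only [majorant, Nat.add_sub_cancel, Nat.cast_add_one]
  calc (2 * ((n : ℝ) + 1)) ^ β * (C ^ m * (m ! : ℝ) ^ γ / ((m : ℝ) + 1) ^ 2)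
        * (C ^ n * (n ! : ℝ) ^ γ / ((n : ℝ) + 1) ^ 2)
      = 2 ^ β * C ^ (m + n) / (((m : ℝ) + 1) ^ 2 * ((n : ℝ) + 1) ^ 2)
          * (((n : ℝ) + 1) ^ β * ((m ! : ℝ) * n !) ^ γ) := by
        rw [mul_rpow (by norm_num) (by positivity), mul_rpow (by positivity) (by positivity),
          pow_add]
        field_simp
    _ ≤ 2 ^ β * C ^ (m + n) / (((m : ℝ) + 1) ^ 2 * ((n : ℝ) + 1) ^ 2)
          * (((n : ℝ) + 1) * ((m + n + 1)! : ℝ) ^ γ) := by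
        exact mul_le_mul_of_nonneg_left (succ_rpow_mul_factorial_rpow_le β m n) (by positivity)
    _ = 2 ^ β * C ^ (m + n) * ((m + n + 1)! : ℝ) ^ γ
          * (1 / (((m : ℝ) + 1) ^ 2 * ((n : ℝ) + 1))) := by
        field_simp

lemma recStep_majorant_le (β : ℝ) {k : ℕ} (hk : 2 ≤ k) :
    recStep β (majorant β) k ≤ majorant β k := by
  have hk1 : (0 : ℝ) < k - 1 := by
    have : (2 : ℝ) ≤ k := by exact_mod_cast hk
    linarith
  have hpow : (π ^ 2 * 2 ^ β) ^ (k - 1) = (π ^ 2 * 2 ^ β) ^ (k - 2) * (π ^ 2 * 2 ^ β) := by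
    rw [← pow_succ]
    congr 1
    omega
  calc recStep β (majorant β) k
      ≤ 1 / ((k : ℝ) - 1) * ∑ p ∈ posAntidiagonal k,
          2 ^ β * (π ^ 2 * 2 ^ β) ^ (k - 2) * ((k - 1)! : ℝ) ^ max 0 (β - 1)
            * (1 / ((p.1 : ℝ) ^ 2 * p.2)) := by
        refine mul_le_mul_of_nonneg_left (sum_le_sum fun p hp => ?_) (by positivity)
        obtain ⟨hsum, h1, h2⟩ := mem_posAntidiagonal.mp hp
        simpa only [hsum] using mul_majorant_le β h1 h2
    _ ≤ 1 / ((k : ℝ) - 1) * (2 ^ β * (π ^ 2 * 2 ^ β) ^ (k - 2)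
          * ((k - 1)! : ℝ) ^ max 0 (β - 1) * (π ^ 2 * (k - 1) / k ^ 2)) := by
        rw [← mul_sum]
        gcongr
        exact sum_posAntidiagonal_one_div_le hk
    _ = majorant β k := by
        rw [majorant, hpow]
        field_simp

theorem recursive_sequence_bound_general (β : ℝ) (a : ℕ → ℝ)
    (ha1 : a 1 = 1)
    (hrec : ∀ k : ℕ, 2 ≤ k →
      a k = (1 / ((k : ℝ) - 1)) *
        ∑ p ∈ (Finset.HasAntidiagonal.antidiagonal k).filter (fun p => 1 ≤ p.1 ∧ 1 ≤ p.2),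
          (2 * (p.2 : ℝ)) ^ β * a p.1 * a p.2) :
    ∀ k : ℕ, 1 ≤ k →
      a k ≤ (Real.pi ^ 2 * 2 ^ β) ^ (k - 1) * ((Nat.factorial (k - 1) : ℝ)) ^ (max 0 (β - 1)) := by
  intro k hk
  have hmaj : a k ≤ majorant β k :=
    (nonneg_and_le_of_recStep_le (by rw [ha1]; norm_num) (by simp [ha1, majorant]) hrec
      (fun _ => recStep_majorant_le β) k hk).2
  refine hmaj.trans (div_le_self (by positivity) ?_)
  exact one_le_pow₀ (by exact_mod_cast hk)

/-- The sequence defined by `a₁ = 1` and, for `k ≥ 2`,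
`a_k = (1/(k−1)) ∑_{k₁+k₂=k, k₁,k₂≥1} (2k₂)^β a_{k₁} a_{k₂}` satisfies
`a_k ≤ (π² 2^β)^{k−1} ((k−1)!)^{max(0,β−1)}` for all `k ≥ 1`. -/
theorem recursive_sequence_bound (β : ℝ) (hβ : 0 < β) (a : ℕ → ℝ)
    (ha1 : a 1 = 1)
    (hrec : ∀ k : ℕ, 2 ≤ k →
      a k = (1 / ((k : ℝ) - 1)) *
        ∑ p ∈ (Finset.HasAntidiagonal.antidiagonal k).filter (fun p => 1 ≤ p.1 ∧ 1 ≤ p.2),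
          (2 * (p.2 : ℝ)) ^ β * a p.1 * a p.2) :
    ∀ k : ℕ, 1 ≤ k →
      a k ≤ (Real.pi ^ 2 * 2 ^ β) ^ (k - 1) * ((Nat.factorial (k - 1) : ℝ)) ^ (max 0 (β - 1)) :=
  recursive_sequence_bound_general β a ha1 hrec
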